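/- For all z, z' ∈ ℝ^d with |z| ≤ C, the differential entropies of the Gibbs densities satisfy γ · |∫_𝒜 log π_{z'}(a) · π_{z'}(a) da − ∫_𝒜 log π_z(a) · π_z(a) da| ≤ (6B + 4R/C + B(1 + 2(C + R)/γ) · exp(3(BC + R)/γ)) · |z' − z|. -/

import Mathlib

/-!
Write the Gibbs density of a bounded potential `φ` as `π_φ = exp (φ / γ) / Z_φ`, so that
`γ ∫ π_φ log π_φ = ∫ φ π_φ - γ log Z_φ`. If `|φ - ψ| ≤ δ`, then `γ log Z` moves by at most `δ`
and `π_φ ≤ exp (2δ/γ) π_ψ`, so the mean potential `∫ φ π_φ` moves by at most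
`δ + sup |ψ| (exp (2δ/γ) - 1)`. For `φ = ⟪f, z'⟫ + r` and `ψ = ⟪f, z⟫ + r` we have
`δ = B ‖z' - z‖`, and `exp x - 1 ≤ x exp x` makes the bound linear in `‖z' - z‖` as long as
`‖z' - z‖ ≤ C`. For larger increments the crude bound `2 (sup |φ| + sup |ψ|)` is already linear
in `‖z' - z‖`.
-/

open MeasureTheory
open scoped RealInnerProductSpace

/-- The Gibbs probability density `π_z(a) ∝ exp((f(a)·z + r(a))/γ)` on the set `𝒜`. -/
noncomputable def gibbs {m d : ℕ} (𝒜 : Set (EuclideanSpace ℝ (Fin m))) (γ : ℝ)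
    (f : EuclideanSpace ℝ (Fin m) → EuclideanSpace ℝ (Fin d))
    (r : EuclideanSpace ℝ (Fin m) → ℝ)
    (z : EuclideanSpace ℝ (Fin d)) (a : EuclideanSpace ℝ (Fin m)) : ℝ :=
  Real.exp ((⟪f a, z⟫ + r a) / γ) /
    ∫ a' in 𝒜, Real.exp ((⟪f a', z⟫ + r a') / γ)

open Real

namespace Real

lemma exp_sub_one_le_mul_exp (x : ℝ) : exp x - 1 ≤ x * exp x := by
  have h := mul_le_mul_of_nonneg_right (one_sub_le_exp_neg x) (exp_pos x).le
  rw [← exp_add, neg_add_cancel, exp_zero] at h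
  linarith

lemma exp_div_le_exp_mul_exp_div {γ δ x y : ℝ} (hγ : 0 < γ) (h : x ≤ y + δ) :
    exp (x / γ) ≤ exp (δ / γ) * exp (y / γ) := by
  rw [← exp_add, ← add_div]
  gcongr
  linarith

end Real

lemma two_mul_add_mul_exp_sub_one_le {γ C B R t : ℝ} (hγ : 0 < γ) (hC : 0 ≤ C) (hB : 0 ≤ B)
    (hR : 0 ≤ R) (ht : 0 ≤ t) (htC : t ≤ C) :
    2 * (B * t) + (B * C + R) * (exp (2 * (B * t) / γ) - 1)
      ≤ (6 * B + 4 * R / C + B * (1 + 2 * (C + R) / γ) * exp (3 * (B * C + R) / γ)) * t := by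
  set P := exp (2 * (B * C) / γ)
  set Q := exp ((B * C + 3 * R) / γ)
  have hexp : exp (2 * (B * t) / γ) - 1 ≤ 2 * (B * t) / γ * P :=
    (exp_sub_one_le_mul_exp _).trans
      (mul_le_mul_of_nonneg_left (exp_le_exp.2 (by gcongr)) (by positivity))
  have hQ : 2 * (B * C) / γ ≤ Q :=
    calc 2 * (B * C) / γ = 2 * (B * C / γ) := by ring
      _ ≤ exp (B * C / γ) := two_mul_le_exp
      _ ≤ Q := exp_le_exp.2 (by gcongr; linarith)
  have hQ1 : 1 ≤ Q := one_le_exp (by positivity)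
  have hPQ : exp (3 * (B * C + R) / γ) = P * Q := by rw [← exp_add]; ring_nf
  rw [hPQ]
  calc 2 * (B * t) + (B * C + R) * (exp (2 * (B * t) / γ) - 1)
      ≤ 2 * (B * t) + (B * C + R) * (2 * (B * t) / γ * P) := by gcongr
    _ = (2 * B + B * P * (2 * (B * C) / γ) + 2 * B * R / γ * P) * t := by ring
    _ ≤ (2 * B + B * P * Q + 2 * B * (C + R) / γ * (P * Q)) * t := by
        gcongr
        · linarith
        · exact le_mul_of_one_le_right (exp_pos _).le hQ1
    _ ≤ (6 * B + 4 * R / C + B * (1 + 2 * (C + R) / γ) * (P * Q)) * t := by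
        have : 0 ≤ 4 * R / C := by positivity
        gcongr ?_ * t
        linarith [show B * (1 + 2 * (C + R) / γ) * (P * Q)
          = B * P * Q + 2 * B * (C + R) / γ * (P * Q) by ring]

lemma two_mul_add_le_mul {C B R t K : ℝ} (hC : 0 < C) (hB : 0 ≤ B) (hR : 0 ≤ R) (hCt : C < t)
    (hK : 0 ≤ K) : 2 * ((B * (C + t) + R) + (B * C + R)) ≤ (6 * B + 4 * R / C + K) * t := by
  have hRt : 4 * R ≤ 4 * R / C * t := by
    rw [div_mul_eq_mul_div, le_div_iff₀ hC]
    nlinarith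
  nlinarith [mul_le_mul_of_nonneg_left hCt.le hB, mul_nonneg hK (hC.le.trans hCt.le)]

lemma abs_inner_add_le {E : Type*} [NormedAddCommGroup E] [InnerProductSpace ℝ E] {x w : E}
    {s B R : ℝ} (hx : ‖x‖ ≤ B) (hs : |s| ≤ R) : |⟪x, w⟫ + s| ≤ B * ‖w‖ + R :=
  (abs_add_le _ _).trans (add_le_add ((abs_real_inner_le_norm x w).trans (by gcongr)) hs)

namespace Gibbs

variable {α : Type*} [MeasurableSpace α]

noncomputable def partitionFn (μ : Measure α) (γ : ℝ) (φ : α → ℝ) : ℝ :=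
  ∫ a, exp (φ a / γ) ∂μ

noncomputable def density (μ : Measure α) (γ : ℝ) (φ : α → ℝ) (a : α) : ℝ :=
  exp (φ a / γ) / partitionFn μ γ φ

noncomputable def negEntropy (μ : Measure α) (γ : ℝ) (φ : α → ℝ) : ℝ :=
  ∫ a, log (density μ γ φ a) * density μ γ φ a ∂μ

structure IsBoundedPotential (μ : Measure α) (φ : α → ℝ) (M : ℝ) : Prop where
  aemeasurable : AEMeasurable φ μ
  ae_abs_le : ∀ᵐ a ∂μ, |φ a| ≤ M

variable {μ : Measure α} {γ δ M N : ℝ} {φ ψ : α → ℝ}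

lemma partitionFn_nonneg : 0 ≤ partitionFn μ γ φ :=
  integral_nonneg fun _ => (exp_pos _).le

lemma density_nonneg (a : α) : 0 ≤ density μ γ φ a :=
  div_nonneg (exp_pos _).le partitionFn_nonneg

namespace IsBoundedPotential

variable [IsFiniteMeasure μ]

lemma integrable_exp_div (hφ : IsBoundedPotential μ φ M) (hγ : 0 < γ) :
    Integrable (fun a => exp (φ a / γ)) μ := by
  refine .of_bound (hφ.aemeasurable.div_const γ).exp.aestronglyMeasurable (exp (M / γ)) ?_
  filter_upwards [hφ.ae_abs_le] with a ha
  rw [norm_of_nonneg (exp_pos _).le]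
  gcongr
  exact (abs_le.1 ha).2

lemma integrable_density (hφ : IsBoundedPotential μ φ M) (hγ : 0 < γ) :
    Integrable (density μ γ φ) μ :=
  (hφ.integrable_exp_div hγ).div_const _

lemma integrable_mul_density (hψ : IsBoundedPotential μ ψ N) (hφ : IsBoundedPotential μ φ M)
    (hγ : 0 < γ) : Integrable (fun a => ψ a * density μ γ φ a) μ :=
  (hφ.integrable_density hγ).bdd_mul hψ.aemeasurable.aestronglyMeasurable
    (by simpa only [Real.norm_eq_abs] using hψ.ae_abs_le)

lemma partitionFn_le_exp_mul (hφ : IsBoundedPotential μ φ M) (hψ : IsBoundedPotential μ ψ N)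
    (hγ : 0 < γ) (h : ∀ᵐ a ∂μ, φ a ≤ ψ a + δ) :
    partitionFn μ γ φ ≤ exp (δ / γ) * partitionFn μ γ ψ := by
  rw [partitionFn, partitionFn, ← integral_const_mul]
  refine integral_mono_ae (hφ.integrable_exp_div hγ) ((hψ.integrable_exp_div hγ).const_mul _) ?_
  filter_upwards [h] with a ha
  exact exp_div_le_exp_mul_exp_div hγ ha

variable [NeZero μ]

lemma partitionFn_pos (hφ : IsBoundedPotential μ φ M) (hγ : 0 < γ) :
    0 < partitionFn μ γ φ :=
  integral_exp_pos (hφ.integrable_exp_div hγ)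

lemma integral_density (hφ : IsBoundedPotential μ φ M) (hγ : 0 < γ) :
    ∫ a, density μ γ φ a ∂μ = 1 := by
  unfold density
  rw [integral_div]
  exact div_self (hφ.partitionFn_pos hγ).ne'

lemma abs_integral_le_of_abs_le_mul_density (hφ : IsBoundedPotential μ φ M) (hγ : 0 < γ)
    {u : α → ℝ} {c : ℝ} (hu : ∀ᵐ a ∂μ, |u a| ≤ c * density μ γ φ a) :
    |∫ a, u a ∂μ| ≤ c :=
  calc |∫ a, u a ∂μ| ≤ ∫ a, c * density μ γ φ a ∂μ :=
        norm_integral_le_of_norm_le (f := u) ((hφ.integrable_density hγ).const_mul c) hu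
    _ = c := by rw [integral_const_mul, hφ.integral_density hγ, mul_one]

lemma abs_integral_mul_density_le (hφ : IsBoundedPotential μ φ M) (hγ : 0 < γ) :
    |∫ a, φ a * density μ γ φ a ∂μ| ≤ M := by
  refine hφ.abs_integral_le_of_abs_le_mul_density hγ ?_
  filter_upwards [hφ.ae_abs_le] with a ha
  rw [abs_mul, abs_of_nonneg (density_nonneg a)]
  exact mul_le_mul_of_nonneg_right ha (density_nonneg a)

lemma mul_negEntropy_eq (hφ : IsBoundedPotential μ φ M) (hγ : 0 < γ) :
    γ * negEntropy μ γ φ = ∫ a, φ a * density μ γ φ a ∂μ - γ * log (partitionFn μ γ φ) := by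
  have hZ := hφ.partitionFn_pos hγ
  have hlog : ∀ a, log (density μ γ φ a) * density μ γ φ a
      = γ⁻¹ * (φ a * density μ γ φ a) - log (partitionFn μ γ φ) * density μ γ φ a := by
    intro a
    rw [density, log_div (exp_pos _).ne' hZ.ne', log_exp]
    ring
  simp only [negEntropy, hlog]
  rw [integral_sub ((hφ.integrable_mul_density hφ hγ).const_mul _)
      ((hφ.integrable_density hγ).const_mul _),
    integral_const_mul, integral_const_mul, hφ.integral_density hγ]
  field_simp

lemma mul_log_partitionFn_le (hφ : IsBoundedPotential μ φ M) (hψ : IsBoundedPotential μ ψ N)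
    (hγ : 0 < γ) (h : ∀ᵐ a ∂μ, φ a ≤ ψ a + δ) :
    γ * log (partitionFn μ γ φ) ≤ δ + γ * log (partitionFn μ γ ψ) := by
  have hlog : log (partitionFn μ γ φ) ≤ δ / γ + log (partitionFn μ γ ψ) := by
    rw [← log_exp (δ / γ), ← log_mul (exp_pos _).ne' (hψ.partitionFn_pos hγ).ne']
    exact log_le_log (hφ.partitionFn_pos hγ) (hφ.partitionFn_le_exp_mul hψ hγ h)
  calc γ * log (partitionFn μ γ φ) ≤ γ * (δ / γ + log (partitionFn μ γ ψ)) := by gcongr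
    _ = δ + γ * log (partitionFn μ γ ψ) := by field_simp

lemma abs_mul_log_partitionFn_sub_le (hφ : IsBoundedPotential μ φ M)
    (hψ : IsBoundedPotential μ ψ N) (hγ : 0 < γ) (h : ∀ᵐ a ∂μ, |φ a - ψ a| ≤ δ) :
    |γ * log (partitionFn μ γ φ) - γ * log (partitionFn μ γ ψ)| ≤ δ := by
  have h₁ := hφ.mul_log_partitionFn_le hψ hγ (δ := δ) (by
    filter_upwards [h] with a ha
    linarith [(abs_le.1 ha).2])
  have h₂ := hψ.mul_log_partitionFn_le hφ hγ (δ := δ) (by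
    filter_upwards [h] with a ha
    linarith [(abs_le.1 ha).1])
  rw [abs_le]
  constructor <;> linarith

lemma density_le_exp_mul (hφ : IsBoundedPotential μ φ M) (hψ : IsBoundedPotential μ ψ N)
    (hγ : 0 < γ) (h : ∀ᵐ a ∂μ, |φ a - ψ a| ≤ δ) :
    ∀ᵐ a ∂μ, density μ γ φ a ≤ exp (2 * δ / γ) * density μ γ ψ a := by
  have hZφ := hφ.partitionFn_pos hγ
  have hZψ := hψ.partitionFn_pos hγ
  have hZ : partitionFn μ γ ψ ≤ exp (δ / γ) * partitionFn μ γ φ :=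
    hψ.partitionFn_le_exp_mul hφ hγ (by
      filter_upwards [h] with a ha
      linarith [(abs_le.1 ha).1])
  filter_upwards [h] with a ha
  rw [density, div_le_iff₀ hZφ]
  calc exp (φ a / γ) ≤ exp (δ / γ) * exp (ψ a / γ) :=
        exp_div_le_exp_mul_exp_div hγ (by linarith [(abs_le.1 ha).2])
    _ = exp (δ / γ) * (density μ γ ψ a * partitionFn μ γ ψ) := by
        rw [density, div_mul_cancel₀ _ hZψ.ne']
    _ ≤ exp (δ / γ) * (density μ γ ψ a * (exp (δ / γ) * partitionFn μ γ φ)) := by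
        gcongr
        exact density_nonneg a
    _ = exp (2 * δ / γ) * density μ γ ψ a * partitionFn μ γ φ := by
        rw [show 2 * δ / γ = δ / γ + δ / γ by ring, exp_add]
        ring

lemma abs_density_sub_le (hφ : IsBoundedPotential μ φ M) (hψ : IsBoundedPotential μ ψ N)
    (hγ : 0 < γ) (h : ∀ᵐ a ∂μ, |φ a - ψ a| ≤ δ) :
    ∀ᵐ a ∂μ, |density μ γ φ a - density μ γ ψ a| ≤ (exp (2 * δ / γ) - 1) * density μ γ ψ a := by
  have h' : ∀ᵐ a ∂μ, |ψ a - φ a| ≤ δ := by simpa only [abs_sub_comm] using h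
  filter_upwards [hφ.density_le_exp_mul hψ hγ h, hψ.density_le_exp_mul hφ hγ h'] with a h₁ h₂
  have hψa := density_nonneg (μ := μ) (γ := γ) (φ := ψ) a
  rw [abs_le]
  -- the lower bound: `π_φ ≥ π_ψ / E ≥ (2 - E) π_ψ`, as `E (2 - E) ≤ 1` for `E = exp (2δ/γ)`
  constructor <;>
    nlinarith [mul_nonneg hψa (sq_nonneg (exp (2 * δ / γ) - 1)), exp_pos (2 * δ / γ)]

lemma abs_integral_mul_density_sub_le (hφ : IsBoundedPotential μ φ M)
    (hψ : IsBoundedPotential μ ψ N) (hγ : 0 < γ) (h : ∀ᵐ a ∂μ, |φ a - ψ a| ≤ δ) :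
    |∫ a, φ a * density μ γ φ a ∂μ - ∫ a, ψ a * density μ γ ψ a ∂μ|
      ≤ δ + N * (exp (2 * δ / γ) - 1) := by
  have hpt : ∀ᵐ a ∂μ, |φ a * density μ γ φ a - ψ a * density μ γ ψ a|
      ≤ δ * density μ γ φ a + N * (exp (2 * δ / γ) - 1) * density μ γ ψ a := by
    filter_upwards [h, hψ.ae_abs_le, hφ.abs_density_sub_le hψ hγ h] with a h₁ h₂ h₃
    have hsplit : φ a * density μ γ φ a - ψ a * density μ γ ψ a
        = (φ a - ψ a) * density μ γ φ a + ψ a * (density μ γ φ a - density μ γ ψ a) := by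
      ring
    rw [hsplit, mul_assoc]
    refine (abs_add_le _ _).trans (add_le_add ?_ ?_) <;> rw [abs_mul]
    · rw [abs_of_nonneg (density_nonneg a)]
      exact mul_le_mul_of_nonneg_right h₁ (density_nonneg a)
    · exact mul_le_mul h₂ h₃ (abs_nonneg _) ((abs_nonneg _).trans h₂)
  have hint : Integrable
      (fun a => δ * density μ γ φ a + N * (exp (2 * δ / γ) - 1) * density μ γ ψ a) μ :=
    ((hφ.integrable_density hγ).const_mul _).add ((hψ.integrable_density hγ).const_mul _)
  rw [← integral_sub (hφ.integrable_mul_density hφ hγ) (hψ.integrable_mul_density hψ hγ)]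
  calc |∫ a, (φ a * density μ γ φ a - ψ a * density μ γ ψ a) ∂μ|
      ≤ ∫ a, (δ * density μ γ φ a + N * (exp (2 * δ / γ) - 1) * density μ γ ψ a) ∂μ :=
        norm_integral_le_of_norm_le
          (f := fun a => φ a * density μ γ φ a - ψ a * density μ γ ψ a) hint hpt
    _ = δ + N * (exp (2 * δ / γ) - 1) := by
        rw [integral_add ((hφ.integrable_density hγ).const_mul _)
            ((hψ.integrable_density hγ).const_mul _), integral_const_mul, integral_const_mul,
          hφ.integral_density hγ, hψ.integral_density hγ, mul_one, mul_one]

lemma mul_abs_negEntropy_sub_le_add (hφ : IsBoundedPotential μ φ M)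
    (hψ : IsBoundedPotential μ ψ N) (hγ : 0 < γ) :
    γ * |negEntropy μ γ φ - negEntropy μ γ ψ|
      ≤ |∫ a, φ a * density μ γ φ a ∂μ - ∫ a, ψ a * density μ γ ψ a ∂μ|
        + |γ * log (partitionFn μ γ φ) - γ * log (partitionFn μ γ ψ)| := by
  calc γ * |negEntropy μ γ φ - negEntropy μ γ ψ|
      = |γ * negEntropy μ γ φ - γ * negEntropy μ γ ψ| := by
        rw [← mul_sub, abs_mul, abs_of_pos hγ]
    _ = |(∫ a, φ a * density μ γ φ a ∂μ - ∫ a, ψ a * density μ γ ψ a ∂μ)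
          - (γ * log (partitionFn μ γ φ) - γ * log (partitionFn μ γ ψ))| := by
        rw [hφ.mul_negEntropy_eq hγ, hψ.mul_negEntropy_eq hγ]
        ring_nf
    _ ≤ _ := abs_sub _ _

lemma mul_abs_negEntropy_sub_le (hφ : IsBoundedPotential μ φ M) (hψ : IsBoundedPotential μ ψ N)
    (hγ : 0 < γ) (h : ∀ᵐ a ∂μ, |φ a - ψ a| ≤ δ) :
    γ * |negEntropy μ γ φ - negEntropy μ γ ψ| ≤ 2 * δ + N * (exp (2 * δ / γ) - 1) := by
  have hE := hφ.abs_integral_mul_density_sub_le hψ hγ h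
  have hZ := hφ.abs_mul_log_partitionFn_sub_le hψ hγ h
  linarith [hφ.mul_abs_negEntropy_sub_le_add hψ hγ]

lemma mul_abs_negEntropy_sub_le_two_mul_add (hφ : IsBoundedPotential μ φ M)
    (hψ : IsBoundedPotential μ ψ N) (hγ : 0 < γ) :
    γ * |negEntropy μ γ φ - negEntropy μ γ ψ| ≤ 2 * (M + N) := by
  have hE := (abs_sub _ _).trans
    (add_le_add (hφ.abs_integral_mul_density_le hγ) (hψ.abs_integral_mul_density_le hγ))
  have hZ := hφ.abs_mul_log_partitionFn_sub_le hψ hγ (δ := M + N) (by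
    filter_upwards [hφ.ae_abs_le, hψ.ae_abs_le] with a h₁ h₂
    exact (abs_sub _ _).trans (add_le_add h₁ h₂))
  linarith [hφ.mul_abs_negEntropy_sub_le_add hψ hγ]

end IsBoundedPotential

end Gibbs

theorem stmt7 {m d : ℕ}
    (𝒜 : Set (EuclideanSpace ℝ (Fin m)))
    (h𝒜 : IsCompact 𝒜) (h𝒜0 : 0 < volume 𝒜) (h𝒜fin : volume 𝒜 < ⊤)
    (γ C B R : ℝ) (hγ : 0 < γ) (hC : 0 < C) (hB : 0 < B) (hR : 0 < R)
    (f : EuclideanSpace ℝ (Fin m) → EuclideanSpace ℝ (Fin d))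
    (r : EuclideanSpace ℝ (Fin m) → ℝ)
    (hf : Measurable f) (hr : Measurable r)
    (hfB : ∀ a ∈ 𝒜, ‖f a‖ ≤ B) (hrR : ∀ a ∈ 𝒜, |r a| ≤ R)
    (z z' : EuclideanSpace ℝ (Fin d)) (hz : ‖z‖ ≤ C) :
    γ * |(∫ a in 𝒜, Real.log (gibbs 𝒜 γ f r z' a) * gibbs 𝒜 γ f r z' a) -
          ∫ a in 𝒜, Real.log (gibbs 𝒜 γ f r z a) * gibbs 𝒜 γ f r z a| ≤
      (6 * B + 4 * R / C +
          B * (1 + 2 * (C + R) / γ) * Real.exp (3 * (B * C + R) / γ)) * ‖z' - z‖ := by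
  have h𝒜m : MeasurableSet 𝒜 := h𝒜.measurableSet
  have : IsFiniteMeasure (volume.restrict 𝒜) := isFiniteMeasure_restrict.2 h𝒜fin.ne
  have : NeZero (volume.restrict 𝒜) := ⟨fun h => h𝒜0.ne' (Measure.restrict_eq_zero.1 h)⟩
  have hE : ∀ w, Gibbs.IsBoundedPotential (volume.restrict 𝒜) (fun a => ⟪f a, w⟫ + r a)
      (B * ‖w‖ + R) :=
    fun w => ⟨((hf.inner measurable_const).add hr).aemeasurable,
      ae_restrict_of_forall_mem h𝒜m fun a ha => abs_inner_add_le (hfB a ha) (hrR a ha)⟩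
  have hδ : ∀ᵐ a ∂volume.restrict 𝒜, |(⟪f a, z'⟫ + r a) - (⟪f a, z⟫ + r a)| ≤ B * ‖z' - z‖ :=
    ae_restrict_of_forall_mem h𝒜m fun a ha => by
      rw [add_sub_add_right_eq_sub, ← inner_sub_right]
      exact (abs_real_inner_le_norm _ _).trans (by gcongr; exact hfB a ha)
  change γ * |Gibbs.negEntropy (volume.restrict 𝒜) γ (fun a => ⟪f a, z'⟫ + r a)
    - Gibbs.negEntropy (volume.restrict 𝒜) γ (fun a => ⟪f a, z⟫ + r a)| ≤ _
  rcases le_or_gt ‖z' - z‖ C with hsmall | hlarge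
  · calc _ ≤ 2 * (B * ‖z' - z‖) + (B * ‖z‖ + R) * (exp (2 * (B * ‖z' - z‖) / γ) - 1) :=
          (hE z').mul_abs_negEntropy_sub_le (hE z) hγ hδ
      _ ≤ 2 * (B * ‖z' - z‖) + (B * C + R) * (exp (2 * (B * ‖z' - z‖) / γ) - 1) := by
          gcongr
          exact sub_nonneg.2 (one_le_exp (by positivity))
      _ ≤ _ := two_mul_add_mul_exp_sub_one_le hγ hC.le hB.le hR.le (norm_nonneg _) hsmall
  · have hz' : ‖z'‖ ≤ C + ‖z' - z‖ := by linarith [norm_sub_norm_le z' z]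
    calc _ ≤ 2 * ((B * ‖z'‖ + R) + (B * ‖z‖ + R)) :=
          (hE z').mul_abs_negEntropy_sub_le_two_mul_add (hE z) hγ
      _ ≤ 2 * ((B * (C + ‖z' - z‖) + R) + (B * C + R)) := by gcongr
      _ ≤ _ := two_mul_add_le_mul hC hB.le hR.le hlarge (by positivity)
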